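/- arXiv:1804.09463 — 2 statements merged into one kernel-verified Lean document; each statement's English description precedes it below -/
import Mathlib

section
/- Let (ω,v) ∈ so(n) × ℝⁿ satisfy ω v = 0 and v ≠ 0. Then: (i) the assignment Ad*_g(ω,v) ↦ Ad_g(ω,v) is well-defined, i.e. for all g, g' ∈ E(n), if Ad*_g(ω,v) = Ad*_{g'}(ω,v) then Ad_g(ω,v) = Ad_{g'}(ω,v); (ii) the resulting map from the coadjoint orbit through (ω,v) to the adjoint orbit through (ω,v) is surjective; and (iii) its fibre over the point (ω,v) is exactly {(ω + μ(v,d), v) : d ∈ ℝⁿ, ω d = 0}. (This is the affine-bundle projection of the orbit bijection theorem, Part 2: the coadjoint orbit is an affine bundle over the corresponding adjoint orbit.) -/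
open Matrix

abbrev Mat (n : ℕ) := Matrix (Fin n) (Fin n) ℝ
abbrev Vec (n : ℕ) := Fin n → ℝ

/-- `r` is an orthogonal matrix. -/
def IsOrth {n : ℕ} (r : Mat n) : Prop := r * rᵀ = 1 ∧ rᵀ * r = 1

/-- `ω` is skew-symmetric. -/
def IsSkew {n : ℕ} (ω : Mat n) : Prop := ωᵀ = -ω

/-- Adjoint action of `(r,d) ∈ E(n)` on `(ω,v) ∈ so(n) × ℝⁿ`. -/
noncomputable def Ad {n : ℕ} (r : Mat n) (d : Vec n) (ω : Mat n) (v : Vec n) :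
    Mat n × Vec n :=
  (r * ω * r⁻¹, r *ᵥ v - (r * ω * r⁻¹) *ᵥ d)

/-- The momentum map `μ(p,d) = ½(p dᵀ − d pᵀ)`. -/
noncomputable def mu {n : ℕ} (p d : Vec n) : Mat n :=
  (1/2 : ℝ) • (vecMulVec p d - vecMulVec d p)

/-- Coadjoint action of `(r,d) ∈ E(n)` on `(L,p) ∈ so(n)* × (ℝⁿ)* ≃ so(n) × ℝⁿ`. -/
noncomputable def CoAd {n : ℕ} (r : Mat n) (d : Vec n) (L : Mat n) (p : Vec n) :
    Mat n × Vec n :=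
  (r * L * r⁻¹ + mu (r *ᵥ p) d, r *ᵥ p)

lemma mu_mulVec {n : ℕ} (p d x : Vec n) :
    mu p d *ᵥ x = ((1/2 : ℝ) * (d ⬝ᵥ x)) • p - ((1/2 : ℝ) * (p ⬝ᵥ x)) • d := by
  funext i
  simp only [mu, mulVec, dotProduct, Matrix.smul_apply, Matrix.sub_apply, vecMulVec_apply,
    Pi.sub_apply, Pi.smul_apply, smul_eq_mul, Finset.mul_sum]
  rw [Finset.sum_mul, Finset.sum_mul, ← Finset.sum_sub_distrib]
  apply Finset.sum_congr rfl
  intro j _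
  ring

lemma mu_second {n : ℕ} (p d : Vec n) (c : ℝ) : mu p (d - c • p) = mu p d := by
  ext i j
  simp [mu, vecMulVec_apply]
  ring

/-- The explicit inverse-direction map from the coadjoint orbit to the adjoint orbit. -/
noncomputable def FF {n : ℕ} (x : Mat n × Vec n) : Mat n × Vec n :=
  (x.1 - mu x.2 ((-2 / (x.2 ⬝ᵥ x.2)) • (x.1 *ᵥ x.2)),
   x.2 - (x.1 - mu x.2 ((-2 / (x.2 ⬝ᵥ x.2)) • (x.1 *ᵥ x.2))) *ᵥ
     ((-2 / (x.2 ⬝ᵥ x.2)) • (x.1 *ᵥ x.2)))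

lemma conj_mulVec {n : ℕ} (r ω : Mat n) (hr : IsOrth r) (v : Vec n) :
    (r * ω * r⁻¹) *ᵥ (r *ᵥ v) = r *ᵥ (ω *ᵥ v) := by
  rw [Matrix.inv_eq_right_inv hr.1, mulVec_mulVec, Matrix.mul_assoc, Matrix.mul_assoc,
    hr.2, Matrix.mul_one, ← mulVec_mulVec]

lemma F_CoAd {n : ℕ} (ω : Mat n) (v : Vec n) (hωv : ω *ᵥ v = 0) (hv : v ≠ 0)
    (r : Mat n) (hr : IsOrth r) (d : Vec n) : FF (CoAd r d ω v) = Ad r d ω v := by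
  have hrinv : r⁻¹ = rᵀ := Matrix.inv_eq_right_inv hr.1
  set p := r *ᵥ v with hp
  set M₀ := r * ω * r⁻¹ with hM₀
  have hM₀p : M₀ *ᵥ p = 0 := by
    rw [hM₀, hrinv, hp, mulVec_mulVec, Matrix.mul_assoc, Matrix.mul_assoc,
      hr.2, Matrix.mul_one, ← mulVec_mulVec, hωv, mulVec_zero]
  have hpr : p ᵥ* r = v := by
    rw [hp, ← vecMul_transpose, vecMul_vecMul, hr.2, Matrix.vecMul_one]
  have hpp : p ⬝ᵥ p = v ⬝ᵥ v := by
    rw [hp, dotProduct_mulVec, hpr]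
  have hppne : p ⬝ᵥ p ≠ 0 := by
    rw [hpp]; exact fun h => hv (dotProduct_self_eq_zero.mp h)
  have he : (-2 / (p ⬝ᵥ p)) • ((M₀ + mu p d) *ᵥ p) = d - ((d ⬝ᵥ p) / (p ⬝ᵥ p)) • p := by
    rw [add_mulVec, hM₀p, zero_add, mu_mulVec]
    funext i
    simp only [Pi.smul_apply, Pi.sub_apply, smul_eq_mul]
    field_simp
    ring
  simp only [FF, CoAd, Ad]
  rw [he, mu_second, add_sub_cancel_right, mulVec_sub, mulVec_smul, hM₀p, smul_zero, sub_zero]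

/-- The coadjoint orbit through a generic point `(ω,v) ∈ Δ` (with `v ≠ 0`) is an affine
bundle over the corresponding adjoint orbit: the assignment `Ad*_g(ω,v) ↦ Ad_g(ω,v)` is
well defined, surjective onto the adjoint orbit, and its fibre over `(ω,v)` is
`{(ω + μ(v,d), v) : ω d = 0}`. -/
theorem stmt13 {n : ℕ} (ω : Mat n) (hω : IsSkew ω) (v : Vec n) (hωv : ω *ᵥ v = 0)
    (hv : v ≠ 0) :
    (∀ (r : Mat n) (d : Vec n) (r' : Mat n) (d' : Vec n), IsOrth r → IsOrth r' →
      CoAd r d ω v = CoAd r' d' ω v → Ad r d ω v = Ad r' d' ω v) ∧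
    (∃ f : {x : Mat n × Vec n | ∃ (r : Mat n) (d : Vec n), IsOrth r ∧ CoAd r d ω v = x} →
        {x : Mat n × Vec n | ∃ (r : Mat n) (d : Vec n), IsOrth r ∧ Ad r d ω v = x},
      (∀ (r : Mat n) (d : Vec n) (_ : IsOrth r)
          (hx : CoAd r d ω v ∈
            {x : Mat n × Vec n | ∃ (r : Mat n) (d : Vec n), IsOrth r ∧ CoAd r d ω v = x}),
        (f ⟨CoAd r d ω v, hx⟩ : Mat n × Vec n) = Ad r d ω v) ∧
      Function.Surjective f ∧
      (∀ y : {x : Mat n × Vec n | ∃ (r : Mat n) (d : Vec n), IsOrth r ∧ CoAd r d ω v = x},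
        (f y : Mat n × Vec n) = (ω, v) ↔
          ∃ d : Vec n, ω *ᵥ d = 0 ∧ (y : Mat n × Vec n) = (ω + mu v d, v))) := by
  have hF : ∀ (r : Mat n) (d : Vec n), IsOrth r → FF (CoAd r d ω v) = Ad r d ω v :=
    fun r d hr => F_CoAd ω v hωv hv r hr d
  refine ⟨?_, ?_⟩
  · intro r d r' d' hr hr' hco
    rw [← hF r d hr, ← hF r' d' hr', hco]
  · refine ⟨fun x => ⟨FF x.1, by
      obtain ⟨r, d, hr, h⟩ := x.2
      exact ⟨r, d, hr, by rw [← h]; exact (hF r d hr).symm⟩⟩, ?_, ?_, ?_⟩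
    · intro r d hr hx
      exact hF r d hr
    · intro y
      obtain ⟨r, d, hr, h⟩ := y.2
      refine ⟨⟨CoAd r d ω v, ⟨r, d, hr, rfl⟩⟩, ?_⟩
      apply Subtype.ext
      show FF (CoAd r d ω v) = (y : Mat n × Vec n)
      rw [hF r d hr, h]
    · intro y
      constructor
      · intro hfy
        have hfy' : FF (y : Mat n × Vec n) = (ω, v) := hfy
        obtain ⟨r, d, hr, h⟩ := y.2
        rw [← h] at hfy' ⊢
        rw [hF r d hr] at hfy'
        have h1 : r * ω * r⁻¹ = ω := congrArg Prod.fst hfy'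
        have h2 : r *ᵥ v - (r * ω * r⁻¹) *ᵥ d = v := congrArg Prod.snd hfy'
        rw [h1] at h2
        have hcom : ω *ᵥ (r *ᵥ v) = 0 := by
          rw [← h1, conj_mulVec r ω hr v, hωv, mulVec_zero]
        have hrv : r *ᵥ v = v + ω *ᵥ d := by
          have h4 := congrArg (· + ω *ᵥ d) h2
          simpa using h4
        have h00 : ω *ᵥ (ω *ᵥ d) = 0 := by
          have h3 := hcom
          rw [hrv, mulVec_add, hωv, zero_add] at h3
          exact h3
        have hωT : ωᵀ = -ω := hω
        have hdd : (ω *ᵥ d) ⬝ᵥ (ω *ᵥ d) = 0 := by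
          rw [dotProduct_mulVec, ← mulVec_transpose, hωT, neg_mulVec, h00, neg_zero,
            zero_dotProduct]
        have hωd : ω *ᵥ d = 0 := dotProduct_self_eq_zero.mp hdd
        have hrv' : r *ᵥ v = v := by rw [hrv, hωd, add_zero]
        refine ⟨d, hωd, ?_⟩
        simp only [CoAd, h1, hrv']
      · rintro ⟨d, hωd, hy⟩
        have h1 : IsOrth (1 : Mat n) := ⟨by simp, by simp⟩
        have hco : CoAd (1 : Mat n) d ω v = (y : Mat n × Vec n) := by
          rw [hy]
          simp [CoAd]
        show FF (y : Mat n × Vec n) = (ω, v)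
        rw [← hco, hF 1 d h1]
        simp [Ad, hωd]
end

section
/- Let n = 3 and let (L,p) ∈ so(3) × ℝ³ satisfy L p = 0 with L ≠ 0 and p ≠ 0. Then the coadjoint orbit of E(3) through (L,p), equipped with the subspace topology from so(3) × ℝ³, is homeomorphic to the disjoint union (topological sum) of two copies of the set {(u,w) ∈ ℝ³ × ℝ³ : ‖u‖ = 1 and ⟨u,w⟩ = 0} (i.e. to two disjoint copies of the tangent bundle of the 2-sphere). -/
open Matrix

/-!
The axial vector of `L` is parallel to `p`, so `L = hat (c • p)` with `c ≠ 0`. Because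
`r (hat v) rᵀ = hat (det r • r v)` for orthogonal `r` and `μ(q, d) = hat (½ d × q)`, the orbit
point `CoAd r d L p` is `(hat m, q)` with `q = r p` and `⟨m, q⟩ = det r · c |p|²`; conversely
every such pair is reached, by a product of reflections with the right determinant and a
suitable `d`. So the orbit is the union of the two level sets `⟨m, q⟩ = ± c |p|²` of the
Casimirs on `|q| = |p|`, which are closed and disjoint, and each of them is homeomorphic to the
tangent bundle of the unit sphere by `(hat m, q) ↦ (q / |p|, m - (⟨m, q⟩ / |p|²) q)`.
-/

def hat (v : Vec 3) : Mat 3 := !![0, -v 2, v 1; v 2, 0, -v 0; -v 1, v 0, 0]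
def vee (M : Mat 3) : Vec 3 := ![M 2 1, M 0 2, M 1 0]

@[fun_prop]
lemma continuous_hat : Continuous hat := by unfold hat; fun_prop
@[fun_prop]
lemma continuous_vee : Continuous vee := by unfold vee; fun_prop

lemma hat_mulVec (v x : Vec 3) : hat v *ᵥ x = v ⨯₃ x := by
  ext i
  fin_cases i <;> simp [hat, cross_apply, mulVec, dotProduct, Fin.sum_univ_three] <;> ring

lemma hat_add (a b : Vec 3) : hat (a + b) = hat a + hat b := by
  ext i j; fin_cases i <;> fin_cases j <;> simp [hat] <;> ring

lemma vee_hat (v : Vec 3) : vee (hat v) = v := by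
  ext i; fin_cases i <;> simp [vee, hat]

lemma isSkew_hat (v : Vec 3) : IsSkew (hat v) := by
  ext i j; fin_cases i <;> fin_cases j <;> simp [hat]

lemma hat_vee {M : Mat 3} (hM : IsSkew M) : hat (vee M) = M := by
  have h : ∀ i j, M i j = -M j i := fun i j => by simpa using congrFun₂ hM j i
  ext i j
  fin_cases i <;> fin_cases j <;> simp [hat, vee] <;>
    linarith [h 0 0, h 1 1, h 2 2, h 0 1, h 0 2, h 1 2]

lemma mu_eq_hat (q d : Vec 3) : mu q d = hat ((1/2 : ℝ) • d ⨯₃ q) := by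
  ext i j; fin_cases i <;> fin_cases j <;> simp [mu, hat, cross_apply, vecMulVec_apply] <;> ring

lemma transpose_mulVec_cross_mulVec {R : Type*} [CommRing R] (M : Matrix (Fin 3) (Fin 3) R)
    (a b : Fin 3 → R) : Mᵀ *ᵥ ((M *ᵥ a) ⨯₃ (M *ᵥ b)) = M.det • (a ⨯₃ b) := by
  ext i
  fin_cases i <;> simp [cross_apply, mulVec, dotProduct, Fin.sum_univ_three, det_fin_three] <;> ring

namespace IsOrth

section

variable {n : ℕ} {r : Mat n}

lemma inv_eq (hr : IsOrth r) : r⁻¹ = rᵀ := inv_eq_right_inv hr.1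

lemma det_mul_self (hr : IsOrth r) : r.det * r.det = 1 := by
  simpa [det_mul, det_transpose] using congrArg det hr.1

lemma det_eq_one_or_neg_one (hr : IsOrth r) : r.det = 1 ∨ r.det = -1 :=
  mul_self_eq_one_iff.mp hr.det_mul_self

lemma dotProduct_mulVec (hr : IsOrth r) (x y : Vec n) : (r *ᵥ x) ⬝ᵥ (r *ᵥ y) = x ⬝ᵥ y := by
  rw [← vecMul_transpose, ← Matrix.dotProduct_mulVec, mulVec_mulVec, hr.2, one_mulVec]

lemma mul {s : Mat n} (hr : IsOrth r) (hs : IsOrth s) : IsOrth (r * s) := by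
  constructor
  · rw [transpose_mul, Matrix.mul_assoc, ← Matrix.mul_assoc s, hs.1, Matrix.one_mul, hr.1]
  · rw [transpose_mul, Matrix.mul_assoc, ← Matrix.mul_assoc rᵀ, hr.2, Matrix.one_mul, hs.2]

end

lemma mulVec_cross {r : Mat 3} (hr : IsOrth r) (a b : Vec 3) :
    r *ᵥ (a ⨯₃ b) = r.det • ((r *ᵥ a) ⨯₃ (r *ᵥ b)) := by
  have h := congrArg (r *ᵥ ·) (transpose_mulVec_cross_mulVec r a b)
  simp only [mulVec_mulVec, hr.1, one_mulVec, mulVec_smul] at h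
  rw [h, smul_smul, hr.det_mul_self, one_smul]

lemma mul_hat_mul_transpose {r : Mat 3} (hr : IsOrth r) (v : Vec 3) :
    r * hat v * rᵀ = hat (r.det • (r *ᵥ v)) := by
  refine ext_of_mulVec_single fun i => ?_
  rw [← mulVec_mulVec, ← mulVec_mulVec, hat_mulVec, hat_mulVec, hr.mulVec_cross, mulVec_mulVec,
    hr.1, one_mulVec, LinearMap.map_smul₂]

end IsOrth

lemma coAd_hat {r : Mat 3} (hr : IsOrth r) (d v p : Vec 3) :
    CoAd r d (hat v) p = (hat (r.det • (r *ᵥ v) + (1/2 : ℝ) • (d ⨯₃ (r *ᵥ p))), r *ᵥ p) := by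
  rw [CoAd, hr.inv_eq, hr.mul_hat_mul_transpose, mu_eq_hat, ← hat_add]

section Householder

variable {n : ℕ}

noncomputable def householder (v : Vec n) : Mat n := 1 - (2 / (v ⬝ᵥ v)) • vecMulVec v v

lemma householder_mulVec (v x : Vec n) :
    householder v *ᵥ x = x - (2 * (v ⬝ᵥ x) / (v ⬝ᵥ v)) • v := by
  ext i
  simp [householder, sub_mulVec, smul_mulVec, vecMulVec_mulVec]
  ring

lemma transpose_householder (v : Vec n) : (householder v)ᵀ = householder v := by
  simp [householder, transpose_vecMulVec]

lemma householder_mul_self {v : Vec n} (hv : v ≠ 0) : householder v * householder v = 1 := by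
  refine ext_of_mulVec_single fun i => ?_
  have hvv : v ⬝ᵥ v ≠ 0 := mt dotProduct_self_eq_zero.mp hv
  rw [← mulVec_mulVec, householder_mulVec, householder_mulVec, dotProduct_sub, dotProduct_smul,
    smul_eq_mul]
  ext j
  simp only [Pi.sub_apply, Pi.smul_apply, smul_eq_mul, one_mulVec]
  field_simp
  ring

lemma isOrth_householder {v : Vec n} (hv : v ≠ 0) : IsOrth (householder v) := by
  rw [IsOrth, transpose_householder]
  exact ⟨householder_mul_self hv, householder_mul_self hv⟩

lemma det_householder {v : Vec n} (hv : v ≠ 0) : (householder v).det = -1 := by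
  have hvv : v ⬝ᵥ v ≠ 0 := mt dotProduct_self_eq_zero.mp hv
  rw [householder, sub_eq_add_neg, ← neg_smul, ← smul_vecMulVec, vecMulVec_eq Unit,
    det_one_add_replicateCol_mul_replicateRow, dotProduct_smul, smul_eq_mul]
  field_simp
  ring

lemma householder_mulVec_of_dotProduct_eq_zero {v x : Vec n} (h : v ⬝ᵥ x = 0) :
    householder v *ᵥ x = x := by
  simp [householder_mulVec, h]

lemma householder_sub_mulVec {p q : Vec n} (hpq : p ≠ q) (h : q ⬝ᵥ q = p ⬝ᵥ p) :
    householder (p - q) *ᵥ p = q := by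
  have hsub : (p - q) ⬝ᵥ (p - q) = 2 * ((p - q) ⬝ᵥ p) := by
    simp only [sub_dotProduct, dotProduct_sub, dotProduct_comm q p]
    linarith
  have hne : (p - q) ⬝ᵥ (p - q) ≠ 0 := mt dotProduct_self_eq_zero.mp (sub_ne_zero.mpr hpq)
  rw [householder_mulVec, ← hsub, div_self hne, one_smul, sub_sub_cancel]

lemma exists_isOrth_mulVec_eq {p q : Vec n} (h : q ⬝ᵥ q = p ⬝ᵥ p) :
    ∃ r : Mat n, IsOrth r ∧ r *ᵥ p = q := by
  by_cases hpq : p = q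
  · exact ⟨1, by simp [IsOrth], by simp [hpq]⟩
  · exact ⟨_, isOrth_householder (sub_ne_zero.mpr hpq), householder_sub_mulVec hpq h⟩

lemma exists_isOrth_mulVec_eq_of_det [Nontrivial (Fin n)] {p q : Vec n} (h : q ⬝ᵥ q = p ⬝ᵥ p)
    {δ : ℝ} (hδ : δ = 1 ∨ δ = -1) : ∃ r : Mat n, IsOrth r ∧ r *ᵥ p = q ∧ r.det = δ := by
  obtain ⟨r, hr, hrp⟩ := exists_isOrth_mulVec_eq h
  by_cases hdet : r.det = δ
  · exact ⟨r, hr, hrp, hdet⟩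
  -- compose with a reflection fixing `q` to flip the sign of the determinant
  obtain ⟨v, hv, hvq⟩ := exists_ne_zero_dotProduct_eq_zero q
  refine ⟨householder v * r, (isOrth_householder hv).mul hr, ?_, ?_⟩
  · rw [← mulVec_mulVec, hrp, householder_mulVec_of_dotProduct_eq_zero hvq]
  · rw [det_mul, det_householder hv]
    rcases hr.det_eq_one_or_neg_one with h1 | h1 <;> rcases hδ with rfl | rfl <;>
      simp_all

end Householder

lemma exists_eq_hat_smul {L : Mat 3} (hL : IsSkew L) {p : Vec 3} (hLp : L *ᵥ p = 0)
    (hp : p ≠ 0) : ∃ c : ℝ, L = hat (c • p) := by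
  have hcross : p ⨯₃ vee L = 0 := by
    rw [← cross_anticomm, ← hat_mulVec, hat_vee hL, hLp, neg_zero]
  have hdep : ¬LinearIndependent ℝ ![p, vee L] :=
    fun h => crossProduct_ne_zero_iff_linearIndependent.mpr h hcross
  rw [LinearIndependent.pair_iff' hp] at hdep
  push Not at hdep
  obtain ⟨c, hc⟩ := hdep
  exact ⟨c, by rw [hc, hat_vee hL]⟩

/-- `|q|²` and `⟨vee M, q⟩` are the two Casimir functions of `se(3)*`. -/
def casimirLevel (k a : ℝ) : Set (Mat 3 × Vec 3) :=
  {x | IsSkew x.1 ∧ x.2 ⬝ᵥ x.2 = k ∧ vee x.1 ⬝ᵥ x.2 = a}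

lemma coAd_mem_casimirLevel {r : Mat 3} (hr : IsOrth r) (d p : Vec 3) (c : ℝ) :
    CoAd r d (hat (c • p)) p ∈ casimirLevel (p ⬝ᵥ p) (r.det * (c * (p ⬝ᵥ p))) := by
  rw [coAd_hat hr]
  refine ⟨isSkew_hat _, hr.dotProduct_mulVec p p, ?_⟩
  have hperp : (d ⨯₃ (r *ᵥ p)) ⬝ᵥ (r *ᵥ p) = 0 := by rw [dotProduct_comm, dot_cross_self]
  dsimp only
  rw [vee_hat, add_dotProduct, smul_dotProduct, smul_dotProduct, hperp, mulVec_smul,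
    smul_dotProduct, hr.dotProduct_mulVec, smul_eq_mul, smul_eq_mul, smul_zero, add_zero]

lemma exists_coAd_eq_of_mem_casimirLevel {p : Vec 3} (hp : p ≠ 0) (c : ℝ) {δ : ℝ}
    (hδ : δ = 1 ∨ δ = -1) {x : Mat 3 × Vec 3}
    (hx : x ∈ casimirLevel (p ⬝ᵥ p) (δ * (c * (p ⬝ᵥ p)))) :
    ∃ r d, IsOrth r ∧ CoAd r d (hat (c • p)) p = x := by
  obtain ⟨M, q⟩ := x
  obtain ⟨hM, hq, hMq⟩ := hx
  dsimp only at hM hq hMq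
  obtain ⟨r, hr, hrp, hdet⟩ := exists_isOrth_mulVec_eq_of_det hq hδ
  have hqq : q ⬝ᵥ q ≠ 0 := by rwa [hq, Ne, dotProduct_self_eq_zero]
  -- `w ⊥ q`, so `w = ½ d × q` for `d = (2/|q|²) q × w`
  set w := vee M - (δ * c) • q with hw
  have hwq : w ⬝ᵥ q = 0 := by
    rw [hw, sub_dotProduct, smul_dotProduct, hMq, hq, smul_eq_mul]
    ring
  refine ⟨r, (2 / (q ⬝ᵥ q)) • (q ⨯₃ w), hr, ?_⟩
  rw [coAd_hat hr, mulVec_smul, hrp, hdet, LinearMap.map_smul₂, cross_cross_eq_smul_sub_smul, hwq,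
    zero_smul, sub_zero, smul_smul, smul_smul, smul_smul, Prod.mk.injEq]
  refine ⟨?_, rfl⟩
  rw [show 1 / 2 * (2 / (q ⬝ᵥ q)) * (q ⬝ᵥ q) = 1 by field_simp, one_smul, hw,
    add_sub_cancel, hat_vee hM]

lemma orbit_hat_smul_eq {p : Vec 3} (hp : p ≠ 0) (c : ℝ) :
    {x | ∃ r d, IsOrth r ∧ CoAd r d (hat (c • p)) p = x} =
      casimirLevel (p ⬝ᵥ p) (c * (p ⬝ᵥ p)) ∪ casimirLevel (p ⬝ᵥ p) (-(c * (p ⬝ᵥ p))) := by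
  ext x
  constructor
  · rintro ⟨r, d, hr, rfl⟩
    have h := coAd_mem_casimirLevel hr d p c
    rcases hr.det_eq_one_or_neg_one with hdet | hdet <;> rw [hdet] at h
    · exact Or.inl (by simpa using h)
    · exact Or.inr (by simpa using h)
  · rintro (hx | hx)
    · exact exists_coAd_eq_of_mem_casimirLevel hp c (Or.inl rfl) (by simpa using hx)
    · exact exists_coAd_eq_of_mem_casimirLevel hp c (Or.inr rfl) (by simpa using hx)

lemma isClosed_casimirLevel (k a : ℝ) : IsClosed (casimirLevel k a) := by
  refine .inter (isClosed_eq (by fun_prop) (by fun_prop)) (.inter ?_ ?_) <;>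
    exact isClosed_eq (by fun_prop) continuous_const

open Classical in
noncomputable def Homeomorph.unionOfIsClosed {X : Type*} [TopologicalSpace X] {s t : Set X}
    (hs : IsClosed s) (ht : IsClosed t) (hst : Disjoint s t) : ↥(s ∪ t) ≃ₜ s ⊕ t :=
  (Equiv.toHomeomorphOfContinuousClosed (Equiv.Set.union hst).symm
    (continuous_sum_dom.mpr ⟨continuous_inclusion Set.subset_union_left,
      continuous_inclusion Set.subset_union_right⟩)
    (isClosedMap_sum.mpr ⟨hs.isClosedMap_inclusion Set.subset_union_left,
      ht.isClosedMap_inclusion Set.subset_union_right⟩)).symm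

def unitTangentBundle (n : ℕ) : Set (Vec n × Vec n) := {y | y.1 ⬝ᵥ y.1 = 1 ∧ y.1 ⬝ᵥ y.2 = 0}

open scoped RealInnerProductSpace in
noncomputable def unitTangentBundle.homeomorphEuclidean (n : ℕ) :
    unitTangentBundle n ≃ₜ
      {y : EuclideanSpace ℝ (Fin n) × EuclideanSpace ℝ (Fin n) | ‖y.1‖ = 1 ∧ ⟪y.1, y.2⟫ = 0} :=
  ((EuclideanSpace.equiv (Fin n) ℝ).symm.toHomeomorph.prodCongr
    (EuclideanSpace.equiv (Fin n) ℝ).symm.toHomeomorph).subtype fun y => by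
    have hnorm (u : Vec n) : ‖WithLp.toLp 2 u‖ = 1 ↔ u ⬝ᵥ u = 1 := by
      rw [← pow_eq_one_iff_of_nonneg (norm_nonneg _) two_ne_zero, ← real_inner_self_eq_norm_sq,
        EuclideanSpace.inner_toLp_toLp, star_trivial]
    simp [unitTangentBundle, hnorm, EuclideanSpace.inner_toLp_toLp, dotProduct_comm]

noncomputable def casimirLevel.homeomorphUnitTangentBundle {ρ : ℝ} (hρ : ρ ≠ 0) (a : ℝ) :
    casimirLevel (ρ ^ 2) a ≃ₜ unitTangentBundle 3 where
  toFun x := ⟨(ρ⁻¹ • x.1.2, vee x.1.1 - (a / ρ ^ 2) • x.1.2), by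
    obtain ⟨-, hq, hMq⟩ := x.2
    refine ⟨?_, ?_⟩
    · simp only [smul_dotProduct, dotProduct_smul, hq, smul_eq_mul]
      field_simp
    · simp only [smul_dotProduct, dotProduct_smul, dotProduct_sub, dotProduct_comm x.1.2, hq, hMq,
        smul_eq_mul]
      field_simp
      ring⟩
  invFun y := ⟨(hat (y.1.2 + (a / ρ) • y.1.1), ρ • y.1.1), by
    obtain ⟨hu, huw⟩ := y.2
    refine ⟨isSkew_hat _, ?_, ?_⟩
    · simp only [smul_dotProduct, dotProduct_smul, hu, smul_eq_mul]
      ring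
    · simp only [vee_hat, add_dotProduct, smul_dotProduct, dotProduct_smul, dotProduct_comm y.1.2,
        huw, hu, smul_eq_mul]
      field_simp
      ring⟩
  left_inv x := by
    obtain ⟨⟨M, q⟩, hM, -, -⟩ := x
    ext1
    have hcoef : a / ρ * ρ⁻¹ = a / ρ ^ 2 := by field_simp
    simp only [smul_smul, hcoef, sub_add_cancel, hat_vee hM, mul_inv_cancel₀ hρ, one_smul]
  right_inv y := by
    ext1
    have hcoef : a / ρ ^ 2 * ρ = a / ρ := by field_simp
    simp only [smul_smul, hcoef, inv_mul_cancel₀ hρ, one_smul, vee_hat, add_sub_cancel_right]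
  continuous_toFun := by fun_prop
  continuous_invFun := by fun_prop

lemma disjoint_casimirLevel {k a b : ℝ} (hab : a ≠ b) :
    Disjoint (casimirLevel k a) (casimirLevel k b) :=
  Set.disjoint_left.mpr fun _ ha hb => hab (ha.2.2.symm.trans hb.2.2)

open scoped RealInnerProductSpace in
/-- For `(L,p) ∈ Δ*` with `L ≠ 0` and `p ≠ 0`, the coadjoint orbit of `E(3)` through
`(L,p)` is homeomorphic to the disjoint union of two copies of the tangent bundle of the
2-sphere. -/
theorem stmt19 (L : Mat 3) (hL : IsSkew L) (p : Vec 3) (hLp : L *ᵥ p = 0)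
    (hL0 : L ≠ 0) (hp : p ≠ 0) :
    Nonempty
      (({x : Mat 3 × Vec 3 | ∃ (r : Mat 3) (d : Vec 3), IsOrth r ∧ CoAd r d L p = x}) ≃ₜ
       (({y : EuclideanSpace ℝ (Fin 3) × EuclideanSpace ℝ (Fin 3) |
            ‖y.1‖ = 1 ∧ ⟪y.1, y.2⟫ = 0}) ⊕
        ({y : EuclideanSpace ℝ (Fin 3) × EuclideanSpace ℝ (Fin 3) |
            ‖y.1‖ = 1 ∧ ⟪y.1, y.2⟫ = 0}))) := by
  obtain ⟨c, rfl⟩ := exists_eq_hat_smul hL hLp hp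
  have hc : c ≠ 0 := by
    rintro rfl
    exact hL0 (by ext i j; fin_cases i <;> fin_cases j <;> simp [hat])
  have hpos : 0 < p ⬝ᵥ p := by simpa using dotProduct_star_self_pos_iff.mpr hp
  obtain ⟨ρ, hρ, hpρ⟩ : ∃ ρ : ℝ, ρ ≠ 0 ∧ p ⬝ᵥ p = ρ ^ 2 :=
    ⟨√(p ⬝ᵥ p), Real.sqrt_ne_zero'.mpr hpos, (Real.sq_sqrt hpos.le).symm⟩
  have hsheets : c * ρ ^ 2 ≠ -(c * ρ ^ 2) :=
    mt self_eq_neg.mp (mul_ne_zero hc (pow_ne_zero 2 hρ))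
  let sheetHomeomorph (a : ℝ) := (casimirLevel.homeomorphUnitTangentBundle hρ a).trans
    (unitTangentBundle.homeomorphEuclidean 3)
  rw [orbit_hat_smul_eq hp c, hpρ]
  exact ⟨(Homeomorph.unionOfIsClosed (isClosed_casimirLevel _ _) (isClosed_casimirLevel _ _)
    (disjoint_casimirLevel hsheets)).trans ((sheetHomeomorph _).sumCongr (sheetHomeomorph _))⟩
end
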